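/- Let D be an F-division algebra with involution ϑ and ℓ ≥ 1. The maps 𝒫 ↦ PSD_ℓ(𝒫) from prepositive cones on (D,ϑ) to prepositive cones on (M_ℓ(D),ϑ^t), and 𝒬 ↦ Tr_ℓ(𝒬) in the opposite direction, are mutually inverse bijections. -/

import Mathlib

open Pointwise Matrix

/-- An ordering on a field `F`. -/
def IsOrdering {F : Type*} [Field F] (P : Set F) : Prop :=
  (∀ x ∈ P, ∀ y ∈ P, x + y ∈ P) ∧ (∀ x ∈ P, ∀ y ∈ P, x * y ∈ P) ∧
  (∀ x : F, x ∈ P ∨ -x ∈ P) ∧ (∀ x ∈ P, -x ∈ P → x = 0)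

/-- A prepositive cone on an `F`-algebra with involution `(A, star)`:
a subset of the symmetric elements which is nonempty, closed under addition,
closed under `p ↦ star x * p * x`, whose set of preserving scalars is an ordering
of `F`, and which is proper (`PC ∩ -PC = {0}`). -/
def IsPrepositiveCone (F : Type*) {A : Type*} [Field F] [Ring A] [Algebra F A] [StarRing A]
    (PC : Set A) : Prop :=
  (∀ a ∈ PC, star a = a) ∧ PC.Nonempty ∧ (∀ a ∈ PC, ∀ b ∈ PC, a + b ∈ PC) ∧
  (∀ x : A, ∀ p ∈ PC, star x * p * x ∈ PC) ∧
  IsOrdering {u : F | ∀ p ∈ PC, u • p ∈ PC} ∧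
  (∀ a ∈ PC, -a ∈ PC → a = 0)

/-- A prepositive cone over the ordering `P` of `F`. -/
def IsPrepositiveConeOver (F : Type*) {A : Type*} [Field F] [Ring A] [Algebra F A] [StarRing A]
    (P : Set F) (PC : Set A) : Prop :=
  IsPrepositiveCone F PC ∧ {u : F | ∀ p ∈ PC, u • p ∈ PC} = P

/-- `PSD_ℓ` of a subset of a division algebra with involution. -/
def PSDset {D : Type*} [DivisionRing D] [StarRing D] (n : ℕ) (PC : Set D) :
    Set (Matrix (Fin n) (Fin n) D) :=
  {B | Bᴴ = B ∧ ∀ X : Fin n → D, (∑ i, ∑ j, star (X i) * B i j * X j) ∈ PC}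

/-- `Tr_ℓ` of a set of matrices. -/
def TrSet {D : Type*} [DivisionRing D] [StarRing D] {n : ℕ}
    (QC : Set (Matrix (Fin n) (Fin n) D)) : Set D :=
  {d | ∃ B ∈ QC, Matrix.trace B = d}


/-! A scalar `p` sits in `M_ℓ(D)` as the matrix unit `single 0 0 p`, and the value `X* B X` of the
form of `B` is the corner entry of `Cᴴ B C` for `C` the matrix whose first column is `X`; together
with the cone axioms this gives `Tr_ℓ (PSD_ℓ 𝒫) = 𝒫` and `𝒬 ⊆ PSD_ℓ (Tr_ℓ 𝒬)` directly.
For the reverse inclusion, a matrix of `PSD_ℓ 𝒫` is a sum of rank-one matrices `w* p w` with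
`p ∈ 𝒫`: at a nonzero diagonal entry a Schur-complement step (a congruence) splits one off, and
a zero diagonal entry forces its whole row to vanish, since otherwise the form on a plane would
take both values `2` and `-2`. Finally, a scalar preserves `PSD_ℓ 𝒫` iff it preserves `𝒫`,
which transports the ordering of `F` between the two cones. -/

section MatrixIdentities

variable {R m : Type*} [Ring R] [StarRing R] [Fintype m]

theorem star_dotProduct_conj_mulVec (M B : Matrix m m R) (X : m → R) :
    star X ⬝ᵥ (Mᴴ * B * M) *ᵥ X = star (M *ᵥ X) ⬝ᵥ B *ᵥ (M *ᵥ X) := by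
  rw [← mulVec_mulVec, ← mulVec_mulVec, dotProduct_mulVec, ← star_mulVec]

theorem conjTranspose_vecMulVec_mul_mul_vecMulVec (u v : m → R) (B : Matrix m m R) :
    (vecMulVec u v)ᴴ * B * vecMulVec u v = vecMulVec (star v) ((star u ⬝ᵥ B *ᵥ u) • v) := by
  rw [Matrix.mul_assoc, mul_vecMulVec, conjTranspose_vecMulVec, vecMulVec_mul_vecMulVec]

theorem single_star_dotProduct_mulVec_eq_conj [DecidableEq m] (i : m) (B : Matrix m m R)
    (X : m → R) :
    single i i (star X ⬝ᵥ B *ᵥ X) =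
      (vecMulVec X (Pi.single i 1))ᴴ * B * vecMulVec X (Pi.single i 1) := by
  rw [conjTranspose_vecMulVec_mul_mul_vecMulVec, ← Pi.single_star, star_one]
  ext k l
  simp only [single, of_apply, vecMulVec_apply, Pi.smul_apply, Pi.single_apply, smul_eq_mul]
  split_ifs <;> grind

theorem vecMulVec_star_smul_eq_conj_single [DecidableEq m] (i : m) (d : R) (w : m → R) :
    vecMulVec (star w) (d • w) =
      (vecMulVec (Pi.single i 1) w)ᴴ * single i i d * vecMulVec (Pi.single i 1) w := by
  rw [conjTranspose_vecMulVec_mul_mul_vecMulVec]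
  simp

theorem star_dotProduct_mulVec_single_add_single [DecidableEq m] (B : Matrix m m R) (i j : m)
    (x y : R) :
    star (Pi.single i x + Pi.single j y) ⬝ᵥ B *ᵥ (Pi.single i x + Pi.single j y) =
      star x * B i i * x + star x * B i j * y + star y * B j i * x + star y * B j j * y := by
  simp only [star_add, ← Pi.single_star, mulVec_add, mulVec_single, add_dotProduct,
    dotProduct_add, single_dotProduct, Pi.smul_apply, col_apply, op_smul_eq_mul, mul_assoc]
  abel

theorem conj_sub_vecMulVec_eq_sub_vecMulVec [DecidableEq m] {B : Matrix m m R} {i : m}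
    (w : m → R) (hw : B i i • w = B i) :
    (1 - vecMulVec (Pi.single i 1) w)ᴴ * B * (1 - vecMulVec (Pi.single i 1) w) =
      B - vecMulVec (B.col i) w := by
  set V := vecMulVec (Pi.single i 1) w
  have hBV : B * V = vecMulVec (B.col i) w := by rw [mul_vecMulVec, mulVec_single_one]
  have hVB : Vᴴ * B * V = Vᴴ * B := by
    rw [conjTranspose_vecMulVec_mul_mul_vecMulVec, conjTranspose_vecMulVec, vecMulVec_mul]
    simp [hw, row]
  calc (1 - V)ᴴ * B * (1 - V) = B - B * V - (Vᴴ * B - Vᴴ * B * V) := by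
        rw [conjTranspose_sub, conjTranspose_one]; noncomm_ring
    _ = B - vecMulVec (B.col i) w := by rw [hVB, hBV, sub_self, sub_zero]

end MatrixIdentities

section PSD

variable {D : Type*} [DivisionRing D] [StarRing D] {ℓ : ℕ} {PC : Set D}
  {B : Matrix (Fin ℓ) (Fin ℓ) D}

theorem mem_PSDset_iff : B ∈ PSDset ℓ PC ↔ Bᴴ = B ∧ ∀ X, star X ⬝ᵥ B *ᵥ X ∈ PC := by
  have (X : Fin ℓ → D) : ∑ i, ∑ j, star (X i) * B i j * X j = star X ⬝ᵥ B *ᵥ X := by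
    simp [dotProduct, mulVec, Finset.mul_sum, mul_assoc]
  simp only [PSDset, Set.mem_ofPred_eq, this]

namespace PSDset

theorem isHermitian (hB : B ∈ PSDset ℓ PC) : B.IsHermitian := (mem_PSDset_iff.1 hB).1

theorem star_dotProduct_mulVec_mem (hB : B ∈ PSDset ℓ PC) (X : Fin ℓ → D) :
    star X ⬝ᵥ B *ᵥ X ∈ PC :=
  (mem_PSDset_iff.1 hB).2 X

theorem diag_mem (hB : B ∈ PSDset ℓ PC) (i : Fin ℓ) : B i i ∈ PC := by
  simpa using star_dotProduct_mulVec_mem hB (Pi.single i 1)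

theorem conj_mem (hB : B ∈ PSDset ℓ PC) (M : Matrix (Fin ℓ) (Fin ℓ) D) :
    Mᴴ * B * M ∈ PSDset ℓ PC := by
  refine mem_PSDset_iff.2 ⟨?_, fun X => ?_⟩
  · simp [conjTranspose_mul, (isHermitian hB).eq, Matrix.mul_assoc]
  · rw [star_dotProduct_conj_mulVec]
    exact star_dotProduct_mulVec_mem hB _

theorem zero_mem (h0 : 0 ∈ PC) : (0 : Matrix (Fin ℓ) (Fin ℓ) D) ∈ PSDset ℓ PC :=
  mem_PSDset_iff.2 ⟨conjTranspose_zero, fun X => by simpa using h0⟩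

theorem add_mem (hadd : ∀ a ∈ PC, ∀ b ∈ PC, a + b ∈ PC) {A : Matrix (Fin ℓ) (Fin ℓ) D}
    (hA : A ∈ PSDset ℓ PC) (hB : B ∈ PSDset ℓ PC) : A + B ∈ PSDset ℓ PC := by
  refine mem_PSDset_iff.2 ⟨by rw [conjTranspose_add, (isHermitian hA).eq, (isHermitian hB).eq],
    fun X => ?_⟩
  rw [add_mulVec, dotProduct_add]
  exact hadd _ (star_dotProduct_mulVec_mem hA X) _ (star_dotProduct_mulVec_mem hB X)

theorem trace_mem (h0 : 0 ∈ PC) (hadd : ∀ a ∈ PC, ∀ b ∈ PC, a + b ∈ PC)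
    (hB : B ∈ PSDset ℓ PC) : trace B ∈ PC :=
  Finset.sum_induction _ (· ∈ PC) (fun a b ha hb => hadd a ha b hb) h0 fun i _ => diag_mem hB i

theorem apply_eq_zero_of_diag_eq_zero (h2 : (2 : D) ≠ 0) (hprop : ∀ a ∈ PC, -a ∈ PC → a = 0)
    (hB : B ∈ PSDset ℓ PC) {i : Fin ℓ} (hii : B i i = 0) (j : Fin ℓ) : B i j = 0 := by
  by_contra hb
  have hsym : ∀ k l, star (B k l) = B l k := fun k l => (isHermitian hB).apply l k
  have key (t : D) (ht : star t = t) : t + t + B j j ∈ PC := by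
    have := star_dotProduct_mulVec_mem hB (Pi.single i (star (B i j)⁻¹ * t) + Pi.single j 1)
    rw [star_dotProduct_mulVec_single_add_single] at this
    convert this using 1
    simp [hii, ← hsym i j, star_mul, star_inv₀, ht, hb]
  have hjj : B j j = 0 :=
    hprop _ (diag_mem hB j) (by simpa using key (-B j j) (by rw [star_neg, hsym]))
  refine h2 (hprop 2 ?_ ?_) <;> rw [← one_add_one_eq_two]
  · simpa [hjj] using key 1 (star_one D)
  · simpa [hjj, neg_add] using key (-1) (by rw [star_neg, star_one])

theorem eq_zero_of_neg_mem (h2 : (2 : D) ≠ 0) (hprop : ∀ a ∈ PC, -a ∈ PC → a = 0)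
    (hB : B ∈ PSDset ℓ PC) (hnB : -B ∈ PSDset ℓ PC) : B = 0 := by
  ext i j
  exact apply_eq_zero_of_diag_eq_zero h2 hprop hB
    (hprop _ (diag_mem hB i) (by simpa using diag_mem hnB i)) j

end PSDset

theorem single_mem_PSDset (hsym : ∀ a ∈ PC, star a = a)
    (hconj : ∀ x : D, ∀ p ∈ PC, star x * p * x ∈ PC) (i : Fin ℓ) {p : D} (hp : p ∈ PC) :
    single i i p ∈ PSDset ℓ PC := by
  refine mem_PSDset_iff.2 ⟨by rw [conjTranspose_single, hsym p hp], fun X => ?_⟩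
  simpa [single_mulVec, dotProduct, Function.update_apply, mul_assoc] using hconj (X i) p hp

theorem TrSet_PSDset [NeZero ℓ] (hsym : ∀ a ∈ PC, star a = a) (h0 : 0 ∈ PC)
    (hadd : ∀ a ∈ PC, ∀ b ∈ PC, a + b ∈ PC) (hconj : ∀ x : D, ∀ p ∈ PC, star x * p * x ∈ PC) :
    TrSet (PSDset ℓ PC) = PC := by
  ext d
  refine ⟨?_, fun hd => ⟨_, single_mem_PSDset hsym hconj 0 hd, trace_single_eq_same _ _⟩⟩
  rintro ⟨B, hB, rfl⟩
  exact PSDset.trace_mem h0 hadd hB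

end PSD

section RankOne

variable {D : Type*} [DivisionRing D] [StarRing D] {ℓ : ℕ} {PC : Set D}
  {B : Matrix (Fin ℓ) (Fin ℓ) D}

def rankOnes (ℓ : ℕ) (PC : Set D) : Set (Matrix (Fin ℓ) (Fin ℓ) D) :=
  {C | ∃ w : Fin ℓ → D, ∃ p ∈ PC, vecMulVec (star w) (p • w) = C}

theorem vecMulVec_col_mem_rankOnes (hB : B.IsHermitian) {i : Fin ℓ} (hi : B i i ∈ PC) :
    vecMulVec (B.col i) ((B i i)⁻¹ • B i) ∈ rankOnes ℓ PC := by
  refine ⟨(B i i)⁻¹ • B i, B i i, hi, ?_⟩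
  ext k l
  by_cases hii : B i i = 0
  · simp [vecMulVec_apply, hii]
  · simp [vecMulVec_apply, star_mul, star_inv₀, hB.apply, mul_assoc, mul_inv_cancel_left₀ hii]

theorem sub_vecMulVec_col_mem_PSDset (hB : B ∈ PSDset ℓ PC) {i : Fin ℓ} (hi : B i i ≠ 0) :
    B - vecMulVec (B.col i) ((B i i)⁻¹ • B i) ∈ PSDset ℓ PC := by
  rw [← conj_sub_vecMulVec_eq_sub_vecMulVec _ (by rw [smul_smul, mul_inv_cancel₀ hi, one_smul])]
  exact PSDset.conj_mem hB _

theorem mem_closure_rankOnes_of_mem_PSDset (h2 : (2 : D) ≠ 0)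
    (hprop : ∀ a ∈ PC, -a ∈ PC → a = 0) (hB : B ∈ PSDset ℓ PC) :
    B ∈ AddSubmonoid.closure (rankOnes ℓ PC) := by
  suffices ∀ s : Finset (Fin ℓ), ∀ B ∈ PSDset ℓ PC, (∀ k ∉ s, B k = 0) →
      B ∈ AddSubmonoid.closure (rankOnes ℓ PC) from this Finset.univ B hB (by simp)
  intro s
  induction s using Finset.induction_on with
  | empty =>
    intro B _ hB0
    rw [show B = 0 from funext fun k => hB0 k (Finset.notMem_empty k)]
    exact zero_mem _
  | insert i s _ ih =>
    intro B hB hBs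
    by_cases hii : B i i = 0
    · refine ih B hB fun k hk => ?_
      by_cases hki : k = i
      · exact hki ▸ funext (PSDset.apply_eq_zero_of_diag_eq_zero h2 hprop hB hii)
      · exact hBs k (by simp [hki, hk])
    · have hsupp : ∀ k ∉ s, (B - vecMulVec (B.col i) ((B i i)⁻¹ • B i)) k = 0 := by
        intro k hk
        by_cases hki : k = i
        · subst hki
          ext l
          simp [vecMulVec_apply, mul_inv_cancel_left₀ hii]
        · have hBk := hBs k (by simp [hki, hk])
          ext l
          simp [vecMulVec_apply, hBk]
      simpa using add_mem (ih _ (sub_vecMulVec_col_mem_PSDset hB hii) hsupp)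
        (AddSubmonoid.subset_closure
          (vecMulVec_col_mem_rankOnes (PSDset.isHermitian hB) (PSDset.diag_mem hB i)))

end RankOne

section TrSet

variable {D : Type*} [DivisionRing D] [StarRing D] {ℓ : ℕ}
  {QC : Set (Matrix (Fin ℓ) (Fin ℓ) D)} {B : Matrix (Fin ℓ) (Fin ℓ) D} {d : D}

theorem star_dotProduct_mulVec_mem_TrSet [NeZero ℓ]
    (hconj : ∀ M, ∀ B ∈ QC, star M * B * M ∈ QC) (hB : B ∈ QC) (X : Fin ℓ → D) :
    star X ⬝ᵥ B *ᵥ X ∈ TrSet QC :=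
  ⟨_, hconj (vecMulVec X (Pi.single 0 1)) B hB, by
    rw [star_eq_conjTranspose, ← single_star_dotProduct_mulVec_eq_conj, trace_single_eq_same]⟩

theorem single_mem_of_mem_TrSet (h0 : 0 ∈ QC) (hadd : ∀ A ∈ QC, ∀ B ∈ QC, A + B ∈ QC)
    (hconj : ∀ M, ∀ B ∈ QC, star M * B * M ∈ QC) (i : Fin ℓ) (hd : d ∈ TrSet QC) :
    single i i d ∈ QC := by
  obtain ⟨C, hC, rfl⟩ := hd
  refine Finset.sum_induction _ (fun x => single i i x ∈ QC)
    (fun a b ha hb => by rw [single_add]; exact hadd _ ha _ hb) (by rwa [single_zero])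
    fun k _ => ?_
  have := hconj (vecMulVec (Pi.single k 1) (Pi.single i 1)) C hC
  rwa [star_eq_conjTranspose, ← single_star_dotProduct_mulVec_eq_conj, ← Pi.single_star,
    star_one, mulVec_single_one, single_one_dotProduct] at this

theorem vecMulVec_mem_of_mem_TrSet [NeZero ℓ] (h0 : 0 ∈ QC)
    (hadd : ∀ A ∈ QC, ∀ B ∈ QC, A + B ∈ QC) (hconj : ∀ M, ∀ B ∈ QC, star M * B * M ∈ QC)
    (w : Fin ℓ → D) (hd : d ∈ TrSet QC) : vecMulVec (star w) (d • w) ∈ QC := by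
  rw [vecMulVec_star_smul_eq_conj_single 0]
  exact hconj _ _ (single_mem_of_mem_TrSet h0 hadd hconj 0 hd)

theorem eq_zero_of_mem_TrSet_of_neg_mem [NeZero ℓ] (h0 : 0 ∈ QC)
    (hadd : ∀ A ∈ QC, ∀ B ∈ QC, A + B ∈ QC) (hconj : ∀ M, ∀ B ∈ QC, star M * B * M ∈ QC)
    (hprop : ∀ A ∈ QC, -A ∈ QC → A = 0) (hd : d ∈ TrSet QC) (hnd : -d ∈ TrSet QC) : d = 0 := by
  have := hprop _ (single_mem_of_mem_TrSet h0 hadd hconj 0 hd)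
    (by rw [single_neg]; exact single_mem_of_mem_TrSet h0 hadd hconj 0 hnd)
  simpa using congrFun₂ this 0 0

theorem PSDset_TrSet [NeZero ℓ] (h2 : (2 : D) ≠ 0) (hsym : ∀ A ∈ QC, star A = A) (h0 : 0 ∈ QC)
    (hadd : ∀ A ∈ QC, ∀ B ∈ QC, A + B ∈ QC) (hconj : ∀ M, ∀ B ∈ QC, star M * B * M ∈ QC)
    (hprop : ∀ A ∈ QC, -A ∈ QC → A = 0) : PSDset ℓ (TrSet QC) = QC := by
  ext B
  refine ⟨fun hB => ?_, fun hB =>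
    mem_PSDset_iff.2 ⟨hsym B hB, star_dotProduct_mulVec_mem_TrSet hconj hB⟩⟩
  refine AddSubmonoid.closure_induction (motive := fun B _ => B ∈ QC) ?_ h0
    (fun A B _ _ hA hB => hadd A hA B hB) (mem_closure_rankOnes_of_mem_PSDset h2
      (fun _ => eq_zero_of_mem_TrSet_of_neg_mem h0 hadd hconj hprop) hB)
  rintro _ ⟨w, d, hd, rfl⟩
  exact vecMulVec_mem_of_mem_TrSet h0 hadd hconj w hd

theorem star_mem_TrSet (hsym : ∀ A ∈ QC, star A = A) (hd : d ∈ TrSet QC) : star d = d := by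
  obtain ⟨B, hB, rfl⟩ := hd
  rw [← trace_conjTranspose, ← star_eq_conjTranspose, hsym B hB]

theorem star_mul_mul_mem_TrSet [NeZero ℓ] (h0 : 0 ∈ QC)
    (hadd : ∀ A ∈ QC, ∀ B ∈ QC, A + B ∈ QC) (hconj : ∀ M, ∀ B ∈ QC, star M * B * M ∈ QC)
    (x : D) (hd : d ∈ TrSet QC) : star x * d * x ∈ TrSet QC :=
  ⟨_, vecMulVec_mem_of_mem_TrSet h0 hadd hconj (Pi.single 0 x) hd, by
    simp [trace_vecMulVec, mul_assoc]⟩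

end TrSet

theorem two_ne_zero_of_algebra {F D : Type*} [Field F] [DivisionRing D] [Algebra F D]
    (h2 : (2 : F) ≠ 0) : (2 : D) ≠ 0 := fun h =>
  h2 ((algebraMap F D).injective (by rw [map_ofNat, h, map_zero]))

section Cones

variable {F D : Type*} [Field F] [DivisionRing D] [Algebra F D] [StarRing D] {ℓ : ℕ}

def scalarsPreserving (F : Type*) {A : Type*} [SMul F A] (S : Set A) : Set F :=
  {u | ∀ p ∈ S, u • p ∈ S}

theorem star_smul_of_star_algebraMap
    (hstar : ∀ c : F, star (algebraMap F D c) = algebraMap F D c) (u : F) (d : D) :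
    star (u • d) = u • star d := by
  rw [Algebra.smul_def, Algebra.smul_def, star_mul, hstar, Algebra.commutes]

theorem PSDset.smul_mem (hstar : ∀ c : F, star (algebraMap F D c) = algebraMap F D c)
    {PC : Set D} {u : F} (hu : u ∈ scalarsPreserving F PC) {B : Matrix (Fin ℓ) (Fin ℓ) D}
    (hB : B ∈ PSDset ℓ PC) : u • B ∈ PSDset ℓ PC := by
  refine mem_PSDset_iff.2 ⟨?_, fun X => ?_⟩
  · ext i j
    simp [star_smul_of_star_algebraMap hstar, (PSDset.isHermitian hB).apply]
  · rw [smul_mulVec, dotProduct_smul]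
    exact hu _ (PSDset.star_dotProduct_mulVec_mem hB X)

theorem scalarsPreserving_PSDset [NeZero ℓ]
    (hstar : ∀ c : F, star (algebraMap F D c) = algebraMap F D c) {PC : Set D}
    (hsym : ∀ a ∈ PC, star a = a) (hconj : ∀ x : D, ∀ p ∈ PC, star x * p * x ∈ PC) :
    scalarsPreserving F (PSDset ℓ PC) = scalarsPreserving F PC := by
  ext u
  refine ⟨fun hu p hp => ?_, fun hu B hB => PSDset.smul_mem hstar hu hB⟩
  simpa using PSDset.diag_mem (hu _ (single_mem_PSDset hsym hconj 0 hp)) 0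

theorem IsPrepositiveCone.zero_mem {A : Type*} [Ring A] [Algebra F A] [StarRing A] {S : Set A}
    (h : IsPrepositiveCone F S) : (0 : A) ∈ S := by
  obtain ⟨p, hp⟩ := h.2.1
  simpa using h.2.2.2.1 0 p hp

theorem IsPrepositiveCone.PSDset [NeZero ℓ] (h2 : (2 : F) ≠ 0)
    (hstar : ∀ c : F, star (algebraMap F D c) = algebraMap F D c) {PC : Set D}
    (hPC : IsPrepositiveCone F PC) : IsPrepositiveCone F (PSDset ℓ PC) := by
  have h0 := hPC.zero_mem
  obtain ⟨hsym, -, hadd, hconj, hord, hprop⟩ := hPC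
  refine ⟨fun B hB => PSDset.isHermitian hB, ⟨0, PSDset.zero_mem h0⟩,
    fun A hA B hB => PSDset.add_mem hadd hA hB, fun M B hB => PSDset.conj_mem hB M, ?_,
    fun B hB hnB => PSDset.eq_zero_of_neg_mem (two_ne_zero_of_algebra h2) hprop hB hnB⟩
  change IsOrdering (scalarsPreserving F _)
  rwa [scalarsPreserving_PSDset hstar hsym hconj]

theorem IsPrepositiveCone.TrSet [NeZero ℓ] (h2 : (2 : F) ≠ 0)
    (hstar : ∀ c : F, star (algebraMap F D c) = algebraMap F D c)
    {QC : Set (Matrix (Fin ℓ) (Fin ℓ) D)} (hQC : IsPrepositiveCone F QC) :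
    IsPrepositiveCone F (TrSet QC) := by
  have h0 := hQC.zero_mem
  obtain ⟨hsym, -, hadd, hconj, hord, hprop⟩ := hQC
  refine ⟨fun d => star_mem_TrSet hsym, ⟨0, 0, h0, trace_zero _ _⟩,
    ?_, fun x d => star_mul_mul_mem_TrSet h0 hadd hconj x, ?_,
    fun d => eq_zero_of_mem_TrSet_of_neg_mem h0 hadd hconj hprop⟩
  · rintro _ ⟨A, hA, rfl⟩ _ ⟨B, hB, rfl⟩
    exact ⟨A + B, hadd A hA B hB, trace_add A B⟩
  · change IsOrdering (scalarsPreserving F _)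
    rwa [← scalarsPreserving_PSDset (ℓ := ℓ) hstar (fun d => star_mem_TrSet hsym)
      (fun x d => star_mul_mul_mem_TrSet h0 hadd hconj x),
      PSDset_TrSet (two_ne_zero_of_algebra h2) hsym h0 hadd hconj hprop]

end Cones

theorem stmt_11_general {F D : Type*} [Field F] [DivisionRing D] [Algebra F D] [StarRing D]
    (h2 : (2 : F) ≠ 0)
    (hstar : ∀ c : F, star (algebraMap F D c) = algebraMap F D c)
    (n : ℕ) :
    (∀ PC : Set D, IsPrepositiveCone F PC →
      IsPrepositiveCone F (PSDset (n + 1) PC) ∧ TrSet (PSDset (n + 1) PC) = PC) ∧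
    (∀ QC : Set (Matrix (Fin (n + 1)) (Fin (n + 1)) D), IsPrepositiveCone F QC →
      IsPrepositiveCone F (TrSet QC) ∧ PSDset (n + 1) (TrSet QC) = QC) := by
  refine ⟨fun PC hPC => ⟨hPC.PSDset h2 hstar, ?_⟩, fun QC hQC => ⟨hQC.TrSet h2 hstar, ?_⟩⟩
  · have h0 := hPC.zero_mem
    obtain ⟨hsym, -, hadd, hconj, -⟩ := hPC
    exact TrSet_PSDset hsym h0 hadd hconj
  · have h0 := hQC.zero_mem
    obtain ⟨hsym, -, hadd, hconj, -, hprop⟩ := hQC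
    exact PSDset_TrSet (two_ne_zero_of_algebra h2) hsym h0 hadd hconj hprop

/-- The maps `PC ↦ PSD_ℓ(PC)` and `QC ↦ Tr_ℓ(QC)` are mutually inverse bijections between
prepositive cones on `(D,ϑ)` and prepositive cones on `(M_ℓ(D), ϑ^t)`, `ℓ = n+1 ≥ 1`. -/
theorem stmt_11 {F D : Type*} [Field F] [DivisionRing D] [Algebra F D] [StarRing D]
    [FiniteDimensional F D] (h2 : (2 : F) ≠ 0)
    (hstar : ∀ c : F, star (algebraMap F D c) = algebraMap F D c)
    (n : ℕ) :
    (∀ PC : Set D, IsPrepositiveCone F PC →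
      IsPrepositiveCone F (PSDset (n + 1) PC) ∧ TrSet (PSDset (n + 1) PC) = PC) ∧
    (∀ QC : Set (Matrix (Fin (n + 1)) (Fin (n + 1)) D), IsPrepositiveCone F QC →
      IsPrepositiveCone F (TrSet QC) ∧ PSDset (n + 1) (TrSet QC) = QC) :=
  stmt_11_general h2 hstar n
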